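/- arXiv:2605.17783 — 7 statements merged into one kernel-verified Lean document; each statement's English description precedes it below -/
import Mathlib

section
/- For every integer n ≥ 2, the path P_n on n vertices is not equitably DP 2-colorable; that is, there exists a 2-cover H of P_n admitting no ⌈n/2⌉-bounded H-coloring. -/
/-- A DP-cover (correspondence cover) of a graph `G` with colors in `Γ`:
lists `L v`, and a symmetric adjacency relation between nodes `(v, γ)`
that projects to edges of `G` and is a partial matching between fibers. -/
structure DPCover {V : Type*} (G : SimpleGraph V) (Γ : Type*) where
  L : V → Finset Γ
  Adj : V × Γ → V × Γ → Prop
  symm : ∀ p q, Adj p q → Adj q p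
  adj_sub : ∀ u α w β, Adj (u, α) (w, β) → G.Adj u w ∧ α ∈ L u ∧ β ∈ L w
  matching : ∀ u α w β β', Adj (u, α) (w, β) → Adj (u, α) (w, β') → β = β'

/-- `H` is a `k`-cover: every list has size `k`. -/
def DPCover.IsKCover {V Γ : Type*} {G : SimpleGraph V} (H : DPCover G Γ) (k : ℕ) : Prop :=
  ∀ v, (H.L v).card = k

/-- An `H`-coloring: a choice from every list whose graph is independent in the cover. -/
def DPCover.IsColoring {V Γ : Type*} {G : SimpleGraph V} (H : DPCover G Γ) (f : V → Γ) : Prop :=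
  (∀ v, f v ∈ H.L v) ∧ ∀ u w, ¬ H.Adj (u, f u) (w, f w)

/-- The size of the color class of `γ` under `f`. -/
def classSize {V Γ : Type*} [Fintype V] [DecidableEq Γ] (f : V → Γ) (γ : Γ) : ℕ :=
  (Finset.univ.filter fun v => f v = γ).card

/-- Every color class has size at most `m`. -/
def IsBounded {V Γ : Type*} [Fintype V] [DecidableEq Γ] (m : ℕ) (f : V → Γ) : Prop :=
  ∀ γ, classSize f γ ≤ m

/-- `f` is `⌈n/k⌉`-bounded and at most `n % k` color classes have size `⌊n/k⌋ + 1`. -/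
def IsStronglyBounded {V Γ : Type*} [Fintype V] [DecidableEq Γ] (n k : ℕ) (f : V → Γ) : Prop :=
  IsBounded ((n + k - 1) / k) f ∧
  ((Finset.univ.image f).filter fun γ => classSize f γ = n / k + 1).card ≤ n % k

/-- `G` is equitably DP `k`-colorable: every `k`-cover admits a `⌈n/k⌉`-bounded coloring. -/
def EDPColorable {V : Type*} [Fintype V] (G : SimpleGraph V) (k : ℕ) : Prop :=
  ∀ H : DPCover G ℕ, H.IsKCover k →
    ∃ f, H.IsColoring f ∧ IsBounded ((Fintype.card V + k - 1) / k) f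

/-- `G` is strongly equitably DP `k`-colorable: every `k`-cover admits a strongly
`⌈n/k⌉`-bounded coloring. -/
def SEDPColorable {V : Type*} [Fintype V] (G : SimpleGraph V) (k : ℕ) : Prop :=
  ∀ H : DPCover G ℕ, H.IsKCover k →
    ∃ f, H.IsColoring f ∧ IsStronglyBounded (Fintype.card V) k f

/-- For every integer `n ≥ 2`, the path `P_n` on `n` vertices is not equitably
DP 2-colorable: some 2-cover admits no `⌈n/2⌉`-bounded coloring. -/
theorem path_not_EDP_two_colorable (n : ℕ) (hn : 2 ≤ n) :
    ¬ EDPColorable (SimpleGraph.pathGraph n) 2 := by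
  intro h
  set H : DPCover (SimpleGraph.pathGraph n) ℕ :=
    { L := fun _ => {0, 1}
      Adj := fun p q => (SimpleGraph.pathGraph n).Adj p.1 q.1 ∧
        p.2 ∈ ({0, 1} : Finset ℕ) ∧ q.2 ∈ ({0, 1} : Finset ℕ) ∧ p.2 ≠ q.2
      symm := fun p q ⟨ha, h1, h2, h3⟩ => ⟨ha.symm, h2, h1, h3.symm⟩
      adj_sub := fun u α w β ⟨ha, h1, h2, _⟩ => ⟨ha, h1, h2⟩
      matching := by
        rintro u α w β β' ⟨-, hα, hβ, hαβ⟩ ⟨-, -, hβ', hαβ'⟩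
        simp only [Finset.mem_insert, Finset.mem_singleton] at hα hβ hβ'
        omega } with hH
  have hk2 : H.IsKCover 2 := by
    intro v
    show ({0, 1} : Finset ℕ).card = 2
    decide
  obtain ⟨f, ⟨hmem, hind⟩, hbd⟩ := h H hk2
  -- f is constant along the path
  have hconst : ∀ m (hm : m < n), f ⟨m, hm⟩ = f ⟨0, by omega⟩ := by
    intro m
    induction m with
    | zero => intro hm; rfl
    | succ k ih =>
      intro hm
      have hk : k < n := by omega
      have hadj : (SimpleGraph.pathGraph n).Adj ⟨k, hk⟩ ⟨k + 1, hm⟩ := by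
        rw [SimpleGraph.pathGraph_adj]; left; rfl
      have := hind ⟨k, hk⟩ ⟨k + 1, hm⟩
      simp only [hH] at this
      push_neg at this
      have heq : f ⟨k, hk⟩ = f ⟨k + 1, hm⟩ := by
        by_contra hne
        exact hne (this hadj (hmem _) (hmem _))
      rw [← heq, ih hk]
  -- so the class of f 0 is everything
  have h0 : (0 : ℕ) < n := by omega
  have hclass : classSize f (f ⟨0, h0⟩) = n := by
    have : (Finset.univ.filter fun v => f v = f ⟨0, h0⟩) = Finset.univ := by
      apply Finset.eq_univ_iff_forall.mpr
      intro v
      simp only [Finset.mem_filter, Finset.mem_univ, true_and]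
      obtain ⟨m, hm⟩ := v
      exact hconst m hm
    rw [classSize, this, Finset.card_univ, Fintype.card_fin]
  have := hbd (f ⟨0, h0⟩)
  rw [hclass, Fintype.card_fin] at this
  omega
end

section
/- The cycle C_3 on 3 vertices is neither equitably DP 3-colorable nor equitably DP 4-colorable; that is, there exists a 3-cover H_3 of C_3 admitting no 1-bounded (i.e., injective) H_3-coloring, and there exists a 4-cover H_4 of C_3 admitting no 1-bounded H_4-coloring. -/
lemma injective_of_bounded_one {V Γ : Type*} [Fintype V] [DecidableEq Γ] {f : V → Γ}
    (hb : IsBounded 1 f) : Function.Injective f := by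
  intro u w h
  have h1 := hb (f w)
  rw [classSize, Finset.card_le_one] at h1
  exact h1 u (by simp [h]) w (by simp)

/-- The bad 3-cover of `C₃`: all lists `{0,1,2}`, every edge matching is `+1 mod 3`
(oriented from the smaller-index vertex to the larger). -/
def badCover3 : DPCover (SimpleGraph.cycleGraph 3) ℕ where
  L _ := Finset.range 3
  Adj p q := (SimpleGraph.cycleGraph 3).Adj p.1 q.1 ∧ p.2 < 3 ∧ q.2 < 3 ∧
    ((p.1 < q.1 ∧ q.2 = (p.2 + 1) % 3) ∨ (q.1 < p.1 ∧ p.2 = (q.2 + 1) % 3))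
  symm p q h := ⟨h.1.symm, h.2.2.1, h.2.1, h.2.2.2.symm⟩
  adj_sub u α w β h := ⟨h.1, Finset.mem_range.mpr h.2.1, Finset.mem_range.mpr h.2.2.1⟩
  matching u α w β β' h h' := by
    rcases h.2.2.2 with ⟨hlt, h1⟩ | ⟨hlt, h1⟩ <;>
    rcases h'.2.2.2 with ⟨hlt', h2⟩ | ⟨hlt', h2⟩
    · exact h1.trans h2.symm
    · exact absurd hlt (asymm hlt')
    · exact absurd hlt (asymm hlt')
    · have hβ := h.2.2.1; have hβ' := h'.2.2.1
      simp only at h1 h2 hβ hβ'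
      omega

/-- The bad 4-cover of `C₃`: all lists `{0,1,2,3}`, every edge matching is `+2 mod 4`. -/
def badCover4 : DPCover (SimpleGraph.cycleGraph 3) ℕ where
  L _ := Finset.range 4
  Adj p q := (SimpleGraph.cycleGraph 3).Adj p.1 q.1 ∧ p.2 < 4 ∧ q.2 < 4 ∧
    q.2 = (p.2 + 2) % 4
  symm p q h := ⟨h.1.symm, h.2.2.1, h.2.1, by omega⟩
  adj_sub u α w β h := ⟨h.1, Finset.mem_range.mpr h.2.1, Finset.mem_range.mpr h.2.2.1⟩
  matching u α w β β' h h' := by omega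

/-- The cycle `C₃` is neither equitably DP 3-colorable nor equitably DP 4-colorable. -/
theorem cycle_three_not_EDP_three_or_four_colorable :
    ¬ EDPColorable (SimpleGraph.cycleGraph 3) 3 ∧
    ¬ EDPColorable (SimpleGraph.cycleGraph 3) 4 := by
  have hcard : Fintype.card (Fin 3) = 3 := by simp
  have h01 : (SimpleGraph.cycleGraph 3).Adj 0 1 := by decide
  have h12 : (SimpleGraph.cycleGraph 3).Adj 1 2 := by decide
  have h02 : (SimpleGraph.cycleGraph 3).Adj 0 2 := by decide
  constructor
  · intro hE
    obtain ⟨f, ⟨hmem, hind⟩, hb⟩ := hE badCover3 (fun v => by simp [badCover3])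
    rw [hcard] at hb
    have hinj : Function.Injective f := injective_of_bounded_one (by simpa using hb)
    have ha : f 0 < 3 := Finset.mem_range.mp (hmem 0)
    have hb' : f 1 < 3 := Finset.mem_range.mp (hmem 1)
    have hc : f 2 < 3 := Finset.mem_range.mp (hmem 2)
    have e01 : f 1 ≠ (f 0 + 1) % 3 := fun h =>
      hind 0 1 ⟨h01, ha, hb', Or.inl ⟨show (0:Fin 3) < 1 by decide, h⟩⟩
    have e12 : f 2 ≠ (f 1 + 1) % 3 := fun h =>
      hind 1 2 ⟨h12, hb', hc, Or.inl ⟨show (1:Fin 3) < 2 by decide, h⟩⟩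
    have e02 : f 2 ≠ (f 0 + 1) % 3 := fun h =>
      hind 0 2 ⟨h02, ha, hc, Or.inl ⟨show (0:Fin 3) < 2 by decide, h⟩⟩
    have d01 : f 0 ≠ f 1 := fun h => by simpa using hinj h
    have d12 : f 1 ≠ f 2 := fun h => by simpa using hinj h
    have d02 : f 0 ≠ f 2 := fun h => by simpa using hinj h
    omega
  · intro hE
    obtain ⟨f, ⟨hmem, hind⟩, hb⟩ := hE badCover4 (fun v => by simp [badCover4])
    rw [hcard] at hb
    have hinj : Function.Injective f := injective_of_bounded_one (by simpa using hb)
    have ha : f 0 < 4 := Finset.mem_range.mp (hmem 0)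
    have hb' : f 1 < 4 := Finset.mem_range.mp (hmem 1)
    have hc : f 2 < 4 := Finset.mem_range.mp (hmem 2)
    have e01 : f 1 ≠ (f 0 + 2) % 4 := fun h => hind 0 1 ⟨h01, ha, hb', h⟩
    have e12 : f 2 ≠ (f 1 + 2) % 4 := fun h => hind 1 2 ⟨h12, hb', hc, h⟩
    have e02 : f 2 ≠ (f 0 + 2) % 4 := fun h => hind 0 2 ⟨h02, ha, hc, h⟩
    have d01 : f 0 ≠ f 1 := fun h => by simpa using hinj h
    have d12 : f 1 ≠ f 2 := fun h => by simpa using hinj h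
    have d02 : f 0 ≠ f 2 := fun h => by simpa using hinj h
    omega
end

section
/- The cycle C_6 on 6 vertices is not equitably DP 3-colorable; that is, there exists a 3-cover H of C_6 admitting no 2-bounded H-coloring. -/
/-- twist table for the bad cover -/
def sigTab : Fin 6 → Fin 3 → Fin 3 :=
  ![![0,1,2], ![0,1,2], ![1,2,0], ![2,0,1], ![1,2,0], ![2,0,1]]

def sigN (u : Fin 6) (a : ℕ) : ℕ :=
  if h : a < 3 then (sigTab u ⟨a, h⟩ : Fin 3) else 0

def badStep (p q : Fin 6 × ℕ) : Prop :=
  q.1 = p.1 + 1 ∧ p.2 < 3 ∧ q.2 < 3 ∧ q.2 = sigN p.1 p.2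

lemma sigN_lt (u : Fin 6) (a : ℕ) : sigN u a < 3 := by
  unfold sigN; split
  · exact (sigTab u _).isLt
  · norm_num

lemma sigN_inj (u : Fin 6) {a b : ℕ} (ha : a < 3) (hb : b < 3)
    (h : sigN u a = sigN u b) : a = b := by
  unfold sigN at h
  rw [dif_pos ha, dif_pos hb] at h
  have : (⟨a, ha⟩ : Fin 3) = ⟨b, hb⟩ := by
    have h2 : sigTab u ⟨a, ha⟩ = sigTab u ⟨b, hb⟩ := Fin.val_injective h
    revert h2
    have : ∀ (u : Fin 6) (x y : Fin 3), sigTab u x = sigTab u y → x = y := by decide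
    exact this u _ _
  exact congrArg Fin.val this

lemma no_plus_two : ∀ u : Fin 6, u + 1 + 1 ≠ u := by decide

/-- The bad 3-cover of C₆. -/
def badCover : DPCover (SimpleGraph.cycleGraph 6) ℕ where
  L := fun _ => Finset.range 3
  Adj := fun p q => badStep p q ∨ badStep q p
  symm := fun p q h => h.symm
  adj_sub := by
    rintro u α w β (⟨h1, h2, h3, _⟩ | ⟨h1, h2, h3, _⟩) <;> dsimp only at *
    · refine ⟨?_, Finset.mem_range.2 h2, Finset.mem_range.2 h3⟩
      rw [SimpleGraph.cycleGraph_adj]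
      right; rw [h1]; simp
    · refine ⟨?_, Finset.mem_range.2 h3, Finset.mem_range.2 h2⟩
      rw [SimpleGraph.cycleGraph_adj]
      left; rw [h1]; simp
  matching := by
    rintro u α w β β' (⟨h1, h2, h3, h4⟩ | ⟨h1, h2, h3, h4⟩)
        (⟨g1, g2, g3, g4⟩ | ⟨g1, g2, g3, g4⟩) <;> dsimp only at *
    · rw [h4, g4]
    · exact absurd (h1.trans (by rw [g1])).symm (no_plus_two w)
    · exact absurd (g1.trans (by rw [h1])).symm (no_plus_two w)
    · exact sigN_inj w h2 g2 (h4.symm.trans g4)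

lemma key2 : ∀ a b c d e f : Fin 3,
    b ≠ sigTab 0 a → c ≠ sigTab 1 b → d ≠ sigTab 2 c →
    e ≠ sigTab 3 d → f ≠ sigTab 4 e → a ≠ sigTab 5 f →
    ∃ γ : Fin 3, 3 ≤ ((if a = γ then 1 else 0) + (if b = γ then 1 else 0)
      + (if c = γ then 1 else 0) + (if d = γ then 1 else 0)
      + (if e = γ then 1 else 0) + (if f = γ then 1 else 0) : ℕ) := by
  decide

lemma key (g : Fin 6 → Fin 3) (hcon : ∀ v : Fin 6, g (v + 1) ≠ sigTab v (g v)) :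
    ∃ γ : Fin 3, 3 ≤ ((if g 0 = γ then 1 else 0) + (if g 1 = γ then 1 else 0)
      + (if g 2 = γ then 1 else 0) + (if g 3 = γ then 1 else 0)
      + (if g 4 = γ then 1 else 0) + (if g 5 = γ then 1 else 0) : ℕ) :=
  key2 (g 0) (g 1) (g 2) (g 3) (g 4) (g 5)
    (hcon 0) (hcon 1) (hcon 2) (hcon 3) (hcon 4) (hcon 5)

/-- The cycle `C₆` is not equitably DP 3-colorable. -/
theorem cycle_six_not_EDP_three_colorable :
    ¬ EDPColorable (SimpleGraph.cycleGraph 6) 3 := by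
  intro h
  obtain ⟨f, ⟨hmem, hindep⟩, hbd⟩ := h badCover (fun v => by simp [badCover])
  have hlt : ∀ v, f v < 3 := fun v => Finset.mem_range.1 (hmem v)
  set g : Fin 6 → Fin 3 := fun v => ⟨f v, hlt v⟩ with hg
  have hcon : ∀ v : Fin 6, g (v + 1) ≠ sigTab v (g v) := by
    intro v hvv
    apply hindep v (v + 1)
    left
    refine ⟨rfl, hlt v, hlt (v + 1), ?_⟩
    show f (v + 1) = sigN v (f v)
    rw [sigN, dif_pos (hlt v)]
    exact congrArg Fin.val hvv
  obtain ⟨γ, hγ⟩ := key g hcon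
  have hcard : Fintype.card (Fin 6) = 6 := by simp
  have hb := hbd (γ : ℕ)
  rw [hcard] at hb
  have hcs : classSize f (γ : ℕ) = (Finset.univ.filter fun v => g v = γ).card := by
    unfold classSize
    congr 1
    ext v
    simp only [Finset.mem_filter, Finset.mem_univ, true_and, hg]
    constructor
    · intro hv; exact Fin.val_injective hv
    · intro hv; exact congrArg Fin.val hv
  have hsum : (Finset.univ.filter fun v => g v = γ).card
      = ((if g 0 = γ then 1 else 0) + (if g 1 = γ then 1 else 0)
      + (if g 2 = γ then 1 else 0) + (if g 3 = γ then 1 else 0)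
      + (if g 4 = γ then 1 else 0) + (if g 5 = γ then 1 else 0) : ℕ) := by
    rw [Finset.card_filter, Fin.sum_univ_six]
  rw [hcs, hsum] at hb
  omega
end

section
/- Let T be the balanced double star with vertex set {u, u_1, u_2, v, v_1, v_2} and edge set {uu_1, uu_2, uv, vv_1, vv_2}. Then T is not equitably DP 3-colorable; that is, there exists a 3-cover H of T admitting no 2-bounded H-coloring. -/
/-- The balanced double star: vertices `u = 0, u₁ = 1, u₂ = 2, v = 3, v₁ = 4, v₂ = 5`
with edges `uu₁, uu₂, uv, vv₁, vv₂`. -/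
def doubleStar : SimpleGraph (Fin 6) :=
  SimpleGraph.fromRel (fun a b =>
    (a.val = 0 ∧ b.val = 1) ∨ (a.val = 0 ∧ b.val = 2) ∨ (a.val = 0 ∧ b.val = 3) ∨
    (a.val = 3 ∧ b.val = 4) ∨ (a.val = 3 ∧ b.val = 5))

def myBase : Fin 6 × ℕ → Fin 6 × ℕ → Prop := fun p q =>
  p.2 < 3 ∧ q.2 < 3 ∧
  (((p.1 = 0 ∧ (q.1 = 1 ∨ q.1 = 2 ∨ q.1 = 3)) ∧ q.2 = (p.2 + 1) % 3) ∨
   ((p.1 = 3 ∧ q.1 = 4) ∧ q.2 = (p.2 + 1) % 3) ∨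
   ((p.1 = 3 ∧ q.1 = 5) ∧ q.2 = (p.2 + 2) % 3))

lemma ds_adj : ∀ u w : Fin 6,
    ((u = 0 ∧ (w = 1 ∨ w = 2 ∨ w = 3)) ∨ (u = 3 ∧ (w = 4 ∨ w = 5))) →
    doubleStar.Adj u w := by
  intro u w h
  rw [doubleStar, SimpleGraph.fromRel_adj]
  rcases h with ⟨hu, hw | hw | hw⟩ | ⟨hu, hw | hw⟩ <;> subst hu <;> subst hw <;>
    exact ⟨by decide, by decide⟩

set_option maxRecDepth 8000 in
def myCover : DPCover doubleStar ℕ where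
  L := fun _ => {0, 1, 2}
  Adj := fun p q => myBase p q ∨ myBase q p
  symm := fun p q h => h.symm
  adj_sub := by
    rintro u α w β (⟨h1, h2, hc⟩ | ⟨h1, h2, hc⟩)
    · refine ⟨?_, ?_, ?_⟩
      · apply ds_adj
        rcases hc with ⟨⟨hu, hw⟩, _⟩ | ⟨⟨hu, hw⟩, _⟩ | ⟨⟨hu, hw⟩, _⟩ <;> simp_all
      · simp only [Finset.mem_insert, Finset.mem_singleton]; omega
      · simp only [Finset.mem_insert, Finset.mem_singleton]; omega
    · refine ⟨?_, ?_, ?_⟩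
      · apply (SimpleGraph.adj_symm _)
        apply ds_adj
        rcases hc with ⟨⟨hu, hw⟩, _⟩ | ⟨⟨hu, hw⟩, _⟩ | ⟨⟨hu, hw⟩, _⟩ <;> simp_all
      · simp only [Finset.mem_insert, Finset.mem_singleton]; omega
      · simp only [Finset.mem_insert, Finset.mem_singleton]; omega
  matching := by
    rintro u α w β β' (⟨l1, l2, hc⟩ | ⟨l1, l2, hc⟩) (⟨m1, m2, hd⟩ | ⟨m1, m2, hd⟩) <;>
      dsimp only at * <;>
      rcases hc with ⟨⟨hu, hw | hw | hw⟩, he⟩ | ⟨⟨hu, hw⟩, he⟩ | ⟨⟨hu, hw⟩, he⟩ <;>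
      rcases hd with ⟨⟨hu', hw' | hw' | hw'⟩, he'⟩ | ⟨⟨hu', hw'⟩, he'⟩ | ⟨⟨hu', hw'⟩, he'⟩ <;>
      subst_vars <;> omega

set_option maxRecDepth 100000 in
lemma key_s4 : ∀ g : Fin 6 → Fin 3,
    (g 1 ≠ g 0 + 1) → (g 2 ≠ g 0 + 1) → (g 3 ≠ g 0 + 1) →
    (g 4 ≠ g 3 + 1) → (g 5 ≠ g 3 + 2) →
    ∃ γ : Fin 3, 2 < (Finset.univ.filter fun v => g v = γ).card := by decide

open Fin.NatCast in
/-- The balanced double star is not equitably DP 3-colorable: some 3-cover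
admits no 2-bounded coloring. -/
theorem doubleStar_not_EDP_three_colorable : ¬ EDPColorable doubleStar 3 := by
  intro h
  obtain ⟨f, ⟨hmem, hind⟩, hb⟩ := h myCover (fun v => rfl)
  have hf : ∀ v, f v < 3 := by
    intro v
    have := hmem v
    simp only [myCover, Finset.mem_insert, Finset.mem_singleton] at this
    omega
  set g : Fin 6 → Fin 3 := fun v => ⟨f v, hf v⟩ with hg
  have hval : ∀ v, (g v : ℕ) = f v := fun v => rfl
  have step : ∀ (a b : Fin 6) (c : ℕ), ¬ myBase (a, f a) (b, f b) →
      (((a = 0 ∧ (b = 1 ∨ b = 2 ∨ b = 3)) ∨ (a = 3 ∧ b = 4)) ∧ c = 1 ∨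
        (a = 3 ∧ b = 5) ∧ c = 2) → g b ≠ g a + (c : Fin 3) := by
    intro a b c hnb hcase he
    apply hnb
    have dgen : ∀ x y z : Fin 3, y = x + z → (y : ℕ) = ((x : ℕ) + (z : ℕ)) % 3 := by
      decide
    have hvc : (f b) = (f a + c) % 3 := by
      have h3 := dgen _ _ _ he
      have hc3 : c < 3 := by rcases hcase with ⟨_, hc⟩ | ⟨_, hc⟩ <;> omega
      simp only [Fin.val_natCast, hval] at h3
      omega
    refine ⟨hf a, hf b, ?_⟩
    rcases hcase with ⟨⟨ha, hb'⟩ | ⟨ha, hb'⟩, hc⟩ | ⟨⟨ha, hb'⟩, hc⟩ <;> subst ha <;> subst hc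
    · left; exact ⟨⟨rfl, hb'⟩, hvc⟩
    · subst hb'; right; left; exact ⟨⟨rfl, rfl⟩, hvc⟩
    · subst hb'; right; right; exact ⟨⟨rfl, rfl⟩, hvc⟩
  have c1 : g 1 ≠ g 0 + 1 := step 0 1 1 (fun hb' => hind 0 1 (Or.inl hb')) (by tauto)
  have c2 : g 2 ≠ g 0 + 1 := step 0 2 1 (fun hb' => hind 0 2 (Or.inl hb')) (by tauto)
  have c3 : g 3 ≠ g 0 + 1 := step 0 3 1 (fun hb' => hind 0 3 (Or.inl hb')) (by tauto)
  have c4 : g 4 ≠ g 3 + 1 := step 3 4 1 (fun hb' => hind 3 4 (Or.inl hb')) (by tauto)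
  have c5 : g 5 ≠ g 3 + 2 := step 3 5 2 (fun hb' => hind 3 5 (Or.inl hb')) (by tauto)
  obtain ⟨γ, hγ⟩ := key_s4 g c1 c2 c3 c4 c5
  have hcs : classSize f (γ : ℕ) = (Finset.univ.filter fun v => g v = γ).card := by
    unfold classSize
    congr 1
    apply Finset.filter_congr
    intro v _
    constructor
    · intro hv; exact Fin.ext (by rw [hval, hv])
    · intro hv; rw [← hval, hv]
  have := hb (γ : ℕ)
  rw [hcs] at this
  have h6 : (Fintype.card (Fin 6) + 3 - 1) / 3 = 2 := by simp
  omega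
end

section
/- Suppose 0 ≤ d < n, k ≥ n+d, G is an n-vertex graph with a d-degenerate ordering σ = (v_1,…,v_n), and H is a k-cover of G with lists L. Then for every i ∈ {1,…,n} and every injective H-coloring f of the induced subgraph G[{v_1,…,v_{i−1}}], the set A_i of colors α ∈ L(v_i) such that α is not in the range of f and there is no j < i with v_jv_i an edge of G and (v_j, f(v_j)) adjacent to (v_i, α) in H is nonempty; moreover, for any α ∈ A_i the extension of f by v_i ↦ α is an injective H-coloring of G[{v_1,…,v_i}]. Consequently, every n-vertex d-degenerate graph is strongly equitably DP k-colorable for every k ≥ n+d. -/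
/-- `σ` is a `d`-degenerate ordering of `G`: every vertex `σ i` has at most `d`
neighbors among the earlier vertices `σ j`, `j < i`. -/
def IsDegenOrder {n : ℕ} (G : SimpleGraph (Fin n)) (d : ℕ) (σ : Equiv.Perm (Fin n)) : Prop :=
  ∀ i : Fin n, {j : Fin n | j < i ∧ G.Adj (σ j) (σ i)}.ncard ≤ d

/-- `f` is an injective `H`-coloring of the induced subgraph on the vertices
`σ j` with `j < i`. -/
def IsPartialColoring {n : ℕ} {G : SimpleGraph (Fin n)} (H : DPCover G ℕ)
    (σ : Equiv.Perm (Fin n)) (i : Fin n) (f : Fin n → ℕ) : Prop :=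
  (∀ j, j < i → f (σ j) ∈ H.L (σ j)) ∧
  (∀ j j', j < i → j' < i → ¬ H.Adj (σ j, f (σ j)) (σ j', f (σ j'))) ∧
  (∀ j j', j < i → j' < i → j ≠ j' → f (σ j) ≠ f (σ j'))

/-- `f` is an injective `H`-coloring of the induced subgraph on the vertices
`σ j` with `j ≤ i`. -/
def IsPartialColoringLe {n : ℕ} {G : SimpleGraph (Fin n)} (H : DPCover G ℕ)
    (σ : Equiv.Perm (Fin n)) (i : Fin n) (f : Fin n → ℕ) : Prop :=
  (∀ j, j ≤ i → f (σ j) ∈ H.L (σ j)) ∧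
  (∀ j j', j ≤ i → j' ≤ i → ¬ H.Adj (σ j, f (σ j)) (σ j', f (σ j'))) ∧
  (∀ j j', j ≤ i → j' ≤ i → j ≠ j' → f (σ j) ≠ f (σ j'))

/-- The set `A_i` of colors available at `σ i` given the partial coloring `f`:
colors of the list of `σ i` that are not used by `f` on earlier vertices and not
blocked through the cover by an earlier neighbor. -/
def availColors {n : ℕ} {G : SimpleGraph (Fin n)} (H : DPCover G ℕ)
    (σ : Equiv.Perm (Fin n)) (i : Fin n) (f : Fin n → ℕ) : Set ℕ :=
  {α | α ∈ H.L (σ i) ∧ (∀ j, j < i → f (σ j) ≠ α) ∧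
    (∀ j, j < i → ¬ (G.Adj (σ j) (σ i) ∧ H.Adj (σ j, f (σ j)) (σ i, α)))}

/-- Suppose `0 ≤ d < n`, `k ≥ n + d`, `G` is an `n`-vertex graph with a
`d`-degenerate ordering `σ`, and `H` is a `k`-cover of `G`.  Then (first part)
at every step `i`, every injective partial `H`-coloring `f` of the earlier
vertices has a nonempty set `A_i` of available colors, and extending `f` by any
available color yields an injective partial `H`-coloring including step `i`.
Consequently (second part), every `n`-vertex `d`-degenerate graph is strongly
equitably DP `k`-colorable for every `k ≥ n + d`. -/
theorem firstFit_extends_and_degenerate_SEDP (n d k : ℕ) (hdn : d < n) (hk : n + d ≤ k) :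
    (∀ (G : SimpleGraph (Fin n)) (σ : Equiv.Perm (Fin n)), IsDegenOrder G d σ →
      ∀ H : DPCover G ℕ, H.IsKCover k →
        ∀ (i : Fin n) (f : Fin n → ℕ), IsPartialColoring H σ i f →
          (availColors H σ i f).Nonempty ∧
          ∀ α ∈ availColors H σ i f,
            IsPartialColoringLe H σ i (Function.update f (σ i) α)) ∧
    (∀ G : SimpleGraph (Fin n), (∃ σ : Equiv.Perm (Fin n), IsDegenOrder G d σ) →
      SEDPColorable G k) := by
  classical
  have hn : 1 ≤ n := lt_of_le_of_lt (Nat.zero_le d) hdn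
  have hkn : n ≤ k := le_trans (Nat.le_add_right n d) hk
  have key : ∀ (G : SimpleGraph (Fin n)) (σ : Equiv.Perm (Fin n)), IsDegenOrder G d σ →
      ∀ H : DPCover G ℕ, H.IsKCover k →
        ∀ (i : Fin n) (f : Fin n → ℕ), IsPartialColoring H σ i f →
          (availColors H σ i f).Nonempty ∧
          ∀ α ∈ availColors H σ i f,
            IsPartialColoringLe H σ i (Function.update f (σ i) α) := by
    intro G σ hσ H hH i f hf
    obtain ⟨hfL, hfAdj, hfInj⟩ := hf
    constructor
    · -- nonemptiness
      set used : Finset ℕ := (Finset.univ.filter fun j : Fin n => j < i).image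
        (fun j => f (σ j)) with hused
      set N : Finset (Fin n) := Finset.univ.filter
        (fun j : Fin n => j < i ∧ G.Adj (σ j) (σ i)) with hNdef
      set blocked : Finset ℕ := N.biUnion
        (fun j => (H.L (σ i)).filter fun α => H.Adj (σ j, f (σ j)) (σ i, α)) with hbdef
      have husedcard : used.card ≤ i.val := by
        calc used.card ≤ (Finset.univ.filter fun j : Fin n => j < i).card :=
              Finset.card_image_le
        _ = i.val := by
              rw [show (Finset.univ.filter fun j : Fin n => j < i) = Finset.Iio i by
                ext j; simp]
              simp
      have hNcard : N.card ≤ d := by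
        have := hσ i
        rwa [show {j : Fin n | j < i ∧ G.Adj (σ j) (σ i)} = (↑N : Set (Fin n)) by
            ext j; simp [hNdef],
          Set.ncard_coe_finset] at this
      have hblockedcard : blocked.card ≤ d := by
        calc blocked.card ≤ ∑ j ∈ N, ((H.L (σ i)).filter
              fun α => H.Adj (σ j, f (σ j)) (σ i, α)).card := Finset.card_biUnion_le
        _ ≤ ∑ _j ∈ N, 1 := by
              apply Finset.sum_le_sum
              intro j _
              apply Finset.card_le_one.mpr
              intro a ha b hb
              exact H.matching _ _ _ _ _ (Finset.mem_filter.mp ha).2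
                (Finset.mem_filter.mp hb).2
        _ = N.card := by simp
        _ ≤ d := hNcard
      have hrem : (H.L (σ i) \ (used ∪ blocked)).Nonempty := by
        rw [← Finset.card_pos]
        have h1 : (used ∪ blocked).card ≤ i.val + d :=
          le_trans (Finset.card_union_le _ _) (Nat.add_le_add husedcard hblockedcard)
        have h2 : (H.L (σ i)).card - (used ∪ blocked).card ≤
            (H.L (σ i) \ (used ∪ blocked)).card := Finset.le_card_sdiff _ _
        have h3 : k = (H.L (σ i)).card := (hH _).symm
        have h4 : i.val + d < k := by
          have : i.val < n := i.isLt
          omega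
        omega
      obtain ⟨α, hα⟩ := hrem
      obtain ⟨hαL, hαn⟩ := Finset.mem_sdiff.mp hα
      refine ⟨α, hαL, ?_, ?_⟩
      · intro j hj hcontra
        exact hαn (Finset.mem_union_left _ (Finset.mem_image.mpr
          ⟨j, Finset.mem_filter.mpr ⟨Finset.mem_univ _, hj⟩, hcontra⟩))
      · rintro j hj ⟨hGadj, hHadj⟩
        refine hαn (Finset.mem_union_right _ (Finset.mem_biUnion.mpr
          ⟨j, Finset.mem_filter.mpr ⟨Finset.mem_univ _, hj, hGadj⟩,
           Finset.mem_filter.mpr ⟨hαL, hHadj⟩⟩))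
    · -- extension
      intro α hα
      obtain ⟨hαL, hαused, hαblocked⟩ := hα
      have hne : ∀ j : Fin n, j < i → σ j ≠ σ i := by
        intro j hj hc
        exact absurd (σ.injective hc) (ne_of_lt hj)
      have hupd : ∀ j : Fin n, j < i → Function.update f (σ i) α (σ j) = f (σ j) := by
        intro j hj
        exact Function.update_of_ne (hne j hj) _ _
      have huI : Function.update f (σ i) α (σ i) = α := Function.update_self _ _ _
      have hcase : ∀ j : Fin n, j ≤ i → j < i ∨ j = i := by
        intro j hj
        rcases lt_or_eq_of_le hj with h | h
        · exact Or.inl h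
        · exact Or.inr h
      refine ⟨?_, ?_, ?_⟩
      · intro j hj
        rcases hcase j hj with h | h
        · rw [hupd j h]; exact hfL j h
        · subst h; rw [huI]; exact hαL
      · intro j j' hj hj' hadj
        rcases hcase j hj with h | h <;> rcases hcase j' hj' with h' | h'
        · rw [hupd j h, hupd j' h'] at hadj
          exact hfAdj j j' h h' hadj
        · subst h'; rw [hupd j h, huI] at hadj
          exact hαblocked j h ⟨(H.adj_sub _ _ _ _ hadj).1, hadj⟩
        · subst h; rw [hupd j' h', huI] at hadj
          have hadj' := H.symm _ _ hadj
          exact hαblocked j' h' ⟨(H.adj_sub _ _ _ _ hadj').1, hadj'⟩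
        · subst h; subst h'; rw [huI] at hadj
          exact (G.loopless.irrefl _) (H.adj_sub _ _ _ _ hadj).1
      · intro j j' hj hj' hjj'
        rcases hcase j hj with h | h <;> rcases hcase j' hj' with h' | h'
        · rw [hupd j h, hupd j' h']
          exact hfInj j j' h h' hjj'
        · subst h'; rw [hupd j h, huI]
          exact hαused j h
        · subst h; rw [hupd j' h', huI]
          exact fun hc => hαused j' h' hc.symm
        · exact absurd (h.trans h'.symm) hjj'
  refine ⟨key, ?_⟩
  rintro G ⟨σ, hσ⟩ H hH
  -- build a full injective coloring step by step
  have step : ∀ m : ℕ, m ≤ n → ∃ f : Fin n → ℕ,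
      (∀ j : Fin n, j.val < m → f (σ j) ∈ H.L (σ j)) ∧
      (∀ j j' : Fin n, j.val < m → j'.val < m →
        ¬ H.Adj (σ j, f (σ j)) (σ j', f (σ j'))) ∧
      (∀ j j' : Fin n, j.val < m → j'.val < m → j ≠ j' → f (σ j) ≠ f (σ j')) := by
    intro m
    induction m with
    | zero => exact fun _ => ⟨fun _ => 0, fun j hj => absurd hj (Nat.not_lt_zero _),
        fun j j' hj => absurd hj (Nat.not_lt_zero _),
        fun j j' hj => absurd hj (Nat.not_lt_zero _)⟩
    | succ m ih =>
      intro hm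
      obtain ⟨f, hf1, hf2, hf3⟩ := ih (Nat.le_of_succ_le hm)
      set i : Fin n := ⟨m, hm⟩ with hi
      have hlt : ∀ j : Fin n, j < i ↔ j.val < m := by intro j; rfl
      have hpc : IsPartialColoring H σ i f := by
        refine ⟨fun j hj => hf1 j hj, fun j j' hj hj' => hf2 j j' hj hj',
          fun j j' hj hj' => hf3 j j' hj hj'⟩
      obtain ⟨⟨α, hα⟩, hext⟩ := key G σ hσ H hH i f hpc
      have hle := hext α hα
      obtain ⟨h1, h2, h3⟩ := hle
      refine ⟨Function.update f (σ i) α, ?_, ?_, ?_⟩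
      · intro j hj
        exact h1 j (Nat.lt_succ_iff.mp hj)
      · intro j j' hj hj'
        exact h2 j j' (Nat.lt_succ_iff.mp hj) (Nat.lt_succ_iff.mp hj')
      · intro j j' hj hj'
        exact h3 j j' (Nat.lt_succ_iff.mp hj) (Nat.lt_succ_iff.mp hj')
  obtain ⟨f, hf1, hf2, hf3⟩ := step n le_rfl
  have hfinj : Function.Injective f := by
    intro u w huw
    by_contra hc
    have hne : σ.symm u ≠ σ.symm w := fun h => hc (by
      have := congrArg σ h; simpa using this)
    have := hf3 (σ.symm u) (σ.symm w) (σ.symm u).isLt (σ.symm w).isLt hne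
    simp only [Equiv.apply_symm_apply] at this
    exact this huw
  refine ⟨f, ⟨?_, ?_⟩, ?_, ?_⟩
  · intro v
    have := hf1 (σ.symm v) (σ.symm v).isLt
    simpa using this
  · intro u w
    have := hf2 (σ.symm u) (σ.symm w) (σ.symm u).isLt (σ.symm w).isLt
    simpa using this
  · -- bounded
    intro γ
    have hclass : classSize f γ ≤ 1 := by
      apply Finset.card_le_one.mpr
      intro a ha b hb
      apply hfinj
      rw [(Finset.mem_filter.mp ha).2, (Finset.mem_filter.mp hb).2]
    have hcard : Fintype.card (Fin n) = n := Fintype.card_fin n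
    rw [hcard]
    have : 1 ≤ (n + k - 1) / k := by
      apply Nat.one_le_div_iff (by omega) |>.mpr
      omega
    omega
  · -- strong bound
    have hcard : Fintype.card (Fin n) = n := Fintype.card_fin n
    rw [hcard]
    have hclass : ∀ γ, classSize f γ ≤ 1 := by
      intro γ
      apply Finset.card_le_one.mpr
      intro a ha b hb
      apply hfinj
      rw [(Finset.mem_filter.mp ha).2, (Finset.mem_filter.mp hb).2]
    rcases lt_or_eq_of_le hkn with hlt | heq
    · -- n < k : n % k = n, n / k = 0
      have h1 : n % k = n := Nat.mod_eq_of_lt hlt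
      have h2 : n / k = 0 := Nat.div_eq_of_lt hlt
      rw [h1, h2]
      calc ((Finset.univ.image f).filter fun γ => classSize f γ = 0 + 1).card
          ≤ (Finset.univ.image f).card := Finset.card_filter_le _ _
        _ ≤ (Finset.univ : Finset (Fin n)).card := Finset.card_image_le
        _ = n := by simp
    · -- k = n
      have h1 : n % k = 0 := by rw [← heq]; simp
      have h2 : n / k = 1 := by rw [← heq]; exact Nat.div_self hn
      rw [h1, h2]
      have : ((Finset.univ.image f).filter fun γ => classSize f γ = 1 + 1) = ∅ := by
        apply Finset.filter_eq_empty_iff.mpr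
        intro γ _ hγ
        have := hclass γ
        omega
      rw [this]
      simp
end

section
/- Let G be an n-vertex forest, let k be an integer with 2k ≥ n+2, and let H be a k-cover of G. If G has no ⌈n/k⌉-bounded H-coloring, then each of the following holds: (a) k = n and G is isomorphic to the star K_{1,n−1}; (b) H is plain and H(u,v) is a derangement for every edge uv of G; (c) for every vertex x and all y, z ∈ N(x), H(y,x) = H(z,x). -/
/-- The star `K_{1,n-1}` on `n` vertices: center `0` adjacent to all other
vertices, and no other edges. -/
def starGraph (n : ℕ) : SimpleGraph (Fin n) :=
  SimpleGraph.fromRel (fun a _ => a.val = 0)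

/-- `H(u,v)` is a derangement: `L u ⊆ L v`, each `α ∈ L u` is matched to some
node of the fiber of `v`, and never to `α` itself. -/
def DPCover.IsDerangement {V : Type*} {G : SimpleGraph V} (H : DPCover G ℕ) (u v : V) : Prop :=
  H.L u ⊆ H.L v ∧ ∀ α ∈ H.L u, ∃ β, H.Adj (u, α) (v, β) ∧ β ≠ α

/-- `H` is plain: all lists are the same `k`-set `Γ₀`. -/
def DPCover.IsPlain {V : Type*} {G : SimpleGraph V} (H : DPCover G ℕ) (k : ℕ) : Prop :=
  ∃ Γ₀ : Finset ℕ, Γ₀.card = k ∧ ∀ v, H.L v = Γ₀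


/-!
Colour greedily along a leaf-elimination order of the forest, starting from a precoloured
subtree: every new vertex has at most one coloured neighbour, so it loses at most one colour to
`H` besides the colours whose class is already full. This yields a `⌈n/k⌉`-bounded colouring
unless `k = n`, and for `k = n` it still extends any injective precolouring of a subtree to all
vertices but one.

So let `k = n`, and let `z₀` be a leaf with neighbour `w`. An injective colouring `f` of
`V - z₀` cannot be extended to `z₀`, so `f` uses exactly the colours of `L(z₀)` except the one
matched to `(w, f w)`. Precolouring a single vertex, an edge `wy`, or a path `w c₁ c₂` and reading
off this constraint shows that all lists are equal, that `H(w, y) = H(w, z₀)` for every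
neighbour `y` of `w`, and that no neighbour of `w` other than `z₀` has a further neighbour. A
vertex `y` not adjacent to `w` then lies in another component, and the edge `wy` can be added
without creating a cycle or changing the `H`-colourings; the argument for an edge `wy` then
gives an `H`-edge, hence a `G`-edge, from `w` to `y`. So `G` is the star at `w`.
-/

open Finset

namespace SimpleGraph

variable {V : Type*} {G : SimpleGraph V} [DecidableRel G.Adj]

variable (G) in
def degreeIn (T : Finset V) (v : V) : ℕ := #{u ∈ T | G.Adj u v}

variable (G) in
/-- In a forest this says that `S` induces a tree (or is empty). -/
def IsTreeSet (S : Finset V) : Prop := 2 * #S ≤ ∑ s ∈ S, G.degreeIn S s + 2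

theorem IsAcyclic.card_edgeFinset_lt [Fintype V] [Nonempty V] (hG : G.IsAcyclic) :
    #G.edgeFinset < Fintype.card V := by
  obtain ⟨T, hGT, -, hT⟩ := connected_top.exists_isTree_le_of_le_of_isAcyclic le_top hG
  classical
  have := hT.card_edgeFinset
  have := card_le_card (edgeFinset_mono hGT)
  omega

theorem degree_induce_eq_degreeIn (T : Finset V) (v : (T : Set V)) :
    (G.induce (T : Set V)).degree v = G.degreeIn T v := by
  rw [← card_neighborFinset_eq_degree, degreeIn]
  refine card_bij (fun u _ => u.1) (fun u hu => by simpa [G.adj_comm] using hu)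
    (fun u _ u' _ h => Subtype.ext h) fun u hu => ?_
  simp only [mem_filter] at hu
  exact ⟨⟨u, hu.1⟩, by simpa [G.adj_comm] using hu.2, rfl⟩

theorem IsAcyclic.sum_degreeIn_add_two_le (hG : G.IsAcyclic) {T : Finset V} (hT : T.Nonempty) :
    ∑ v ∈ T, G.degreeIn T v + 2 ≤ 2 * #T := by
  have : Nonempty (T : Set V) := hT.to_subtype
  have hlt := (hG.induce (T : Set V)).card_edgeFinset_lt
  have hsum := (G.induce (T : Set V)).sum_degrees_eq_twice_card_edges
  simp only [degree_induce_eq_degreeIn] at hsum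
  simp only [coe_sort_coe, Fintype.card_coe] at hlt
  rw [← sum_coe_sort T]
  exact (congrArg (· + 2) hsum).trans_le (by omega)

theorem sum_degreeIn_comm (S U : Finset V) :
    ∑ s ∈ S, G.degreeIn U s = ∑ u ∈ U, G.degreeIn S u := by
  have := sum_card_bipartiteAbove_eq_sum_card_bipartiteBelow G.Adj (s := U) (t := S)
  simp only [bipartiteAbove, bipartiteBelow] at this
  simp only [degreeIn, this, G.adj_comm]

theorem isTreeSet_empty : G.IsTreeSet ∅ := by
  simp [IsTreeSet]

theorem isTreeSet_singleton (v : V) : G.IsTreeSet {v} := by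
  simp [IsTreeSet]

variable [DecidableEq V]

theorem degreeIn_union {S U : Finset V} (h : Disjoint S U) (x : V) :
    G.degreeIn (S ∪ U) x = G.degreeIn S x + G.degreeIn U x := by
  rw [degreeIn, filter_union, card_union_of_disjoint (disjoint_filter_filter h)]
  rfl

theorem IsTreeSet.insert {S : Finset V} (hS : G.IsTreeSet S) {u v : V} (hu : u ∈ S) (hv : v ∉ S)
    (huv : G.Adj u v) : G.IsTreeSet (insert v S) := by
  have hdisj : Disjoint {v} S := disjoint_singleton_left.mpr hv
  have hdeg : 1 ≤ G.degreeIn S v := card_pos.mpr ⟨u, mem_filter.mpr ⟨hu, huv⟩⟩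
  have hvv : G.degreeIn {v} v = 0 := by simp [degreeIn]
  have hcomm := sum_degreeIn_comm (G := G) S {v}
  unfold IsTreeSet at hS ⊢
  rw [insert_eq, sum_union hdisj, card_union_of_disjoint hdisj]
  simp only [degreeIn_union hdisj, sum_add_distrib, sum_singleton, card_singleton, hvv]
    at hcomm ⊢
  omega

theorem IsAcyclic.exists_mem_sdiff_degreeIn_le_one (hG : G.IsAcyclic) {S T : Finset V}
    (hS : G.IsTreeSet S) (hST : S ⊆ T) (hne : (T \ S).Nonempty) :
    ∃ v ∈ T \ S, G.degreeIn T v ≤ 1 := by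
  by_contra! h
  set U := T \ S
  have hT : S ∪ U = T := union_sdiff_of_subset hST
  have hdisj : Disjoint S U := disjoint_sdiff
  have hforestT := hG.sum_degreeIn_add_two_le (hne.mono subset_union_right : (S ∪ U).Nonempty)
  have hforestU := hG.sum_degreeIn_add_two_le hne
  have hdegU : 2 * #U ≤ ∑ u ∈ U, G.degreeIn (S ∪ U) u := by
    rw [mul_comm, ← smul_eq_mul, ← sum_const]
    exact sum_le_sum fun u hu => hT ▸ h u hu
  rw [sum_union hdisj, card_union_of_disjoint hdisj] at hforestT
  simp only [degreeIn_union hdisj, sum_add_distrib] at hforestT hdegU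
  have := sum_degreeIn_comm (G := G) S U
  unfold IsTreeSet at hS
  -- Counting edges: none join `S` to `U`, so `U` alone would be a forest of minimum degree 2.
  omega

end SimpleGraph

theorem mul_card_large_fibers_le_card {V Γ : Type*} [DecidableEq Γ] (S : Finset V)
    (C : Finset Γ) (g : V → Γ) (m : ℕ) : m * #{c ∈ C | m ≤ #{u ∈ S | g u = c}} ≤ #S :=
  calc m * #{c ∈ C | m ≤ #{u ∈ S | g u = c}}
      = ∑ c ∈ C with m ≤ #{u ∈ S | g u = c}, m := by rw [sum_const, smul_eq_mul, mul_comm]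
    _ ≤ ∑ c ∈ C with m ≤ #{u ∈ S | g u = c}, #{u ∈ S | g u = c} :=
        sum_le_sum fun c hc => (mem_filter.mp hc).2
    _ = #{u ∈ S | g u ∈ C.filter fun c => m ≤ #{u ∈ S | g u = c}} :=
        sum_card_fiberwise_eq_card_filter _ _ _
    _ ≤ #S := card_filter_le _ _

namespace DPCover

variable {V Γ : Type*} {G : SimpleGraph V} (H : DPCover G Γ)

theorem adj_comm {p q : V × Γ} : H.Adj p q ↔ H.Adj q p :=
  ⟨H.symm p q, H.symm q p⟩

theorem not_adj_self (v : V) (α β : Γ) : ¬ H.Adj (v, α) (v, β) :=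
  fun h => G.irrefl (H.adj_sub _ _ _ _ h).1

theorem matching_left {u w : V} {α α' β : Γ} (h : H.Adj (u, α) (w, β))
    (h' : H.Adj (u, α') (w, β)) : α = α' :=
  H.matching w β u α α' (H.symm _ _ h) (H.symm _ _ h')

theorem exists_adj_of_forall_exists_adj {x z : V}
    (h : ∀ α ∈ H.L x, ∃ β, H.Adj (x, α) (z, β)) (hcard : #(H.L z) ≤ #(H.L x)) :
    ∀ β ∈ H.L z, ∃ α, H.Adj (x, α) (z, β) := by
  choose f hf using h
  intro β hβ
  obtain ⟨α, hα, rfl⟩ := surj_on_of_inj_on_of_card_le f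
    (fun α hα => (H.adj_sub _ _ _ _ (hf α hα)).2.2)
    (fun α α' hα hα' hff => H.matching_left (hf α hα) (hff ▸ hf α' hα')) hcard β hβ
  exact ⟨α, hf α hα⟩

theorem exists_blocked_subset [DecidableRel G.Adj] (S : Finset V) (g : V → Γ) (v : V) :
    ∃ B : Finset Γ, #B ≤ G.degreeIn S v ∧ ∀ c, ∀ u ∈ S, H.Adj (u, g u) (v, c) → c ∈ B := by
  classical
  refine ⟨{u ∈ S | G.Adj u v}.biUnion fun u => {c ∈ H.L v | H.Adj (u, g u) (v, c)},
    (card_biUnion_le_card_mul _ _ 1 fun u _ => ?_).trans_eq (mul_one _), fun c u hu hadj => ?_⟩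
  · exact card_le_one.mpr fun c hc c' hc' =>
      H.matching _ _ _ _ _ (mem_filter.mp hc).2 (mem_filter.mp hc').2
  · have := H.adj_sub _ _ _ _ hadj
    exact mem_biUnion.mpr ⟨u, mem_filter.mpr ⟨hu, this.1⟩, mem_filter.mpr ⟨this.2.2, hadj⟩⟩

theorem exists_mem_ne_ne_not_adj {u v : V} (β a d : Γ) (hv : 3 < #(H.L v)) :
    ∃ b ∈ H.L v, b ≠ a ∧ b ≠ d ∧ ¬ H.Adj (u, β) (v, b) := by
  classical
  have hB : #{b ∈ H.L v | H.Adj (u, β) (v, b)} ≤ 1 := card_le_one.mpr fun b hb b' hb' =>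
    H.matching _ _ _ _ _ (mem_filter.mp hb).2 (mem_filter.mp hb').2
  have := card_insert_le d {b ∈ H.L v | H.Adj (u, β) (v, b)}
  have := card_insert_le a (insert d {b ∈ H.L v | H.Adj (u, β) (v, b)})
  obtain ⟨b, hb, hbx⟩ := exists_mem_notMem_of_card_lt_card
    (s := insert a (insert d {b ∈ H.L v | H.Adj (u, β) (v, b)})) (t := H.L v) (by omega)
  simp only [mem_insert, mem_filter, not_or, not_and] at hbx
  exact ⟨b, hb, hbx.1, hbx.2.1, hbx.2.2 hb⟩

def mono {G' : SimpleGraph V} (hle : G ≤ G') : DPCover G' Γ where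
  L := H.L
  Adj := H.Adj
  symm := H.symm
  adj_sub u α w β h := ⟨hle (H.adj_sub u α w β h).1, (H.adj_sub u α w β h).2⟩
  matching := H.matching

variable [DecidableEq Γ]

def IsBoundedColoringOn (m : ℕ) (S : Finset V) (g : V → Γ) : Prop :=
  (∀ v ∈ S, g v ∈ H.L v) ∧ (∀ u ∈ S, ∀ v ∈ S, ¬ H.Adj (u, g u) (v, g v)) ∧
    ∀ γ, #{v ∈ S | g v = γ} ≤ m

theorem isBoundedColoringOn_empty (m : ℕ) (g : V → Γ) : H.IsBoundedColoringOn m ∅ g := by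
  simp [IsBoundedColoringOn]

variable {H}

theorem isBoundedColoringOn_singleton {m : ℕ} (hm : 0 < m) {g : V → Γ} {v : V}
    (hv : g v ∈ H.L v) : H.IsBoundedColoringOn m {v} g := by
  refine ⟨by simpa using hv, by simpa using H.not_adj_self v (g v) (g v), fun γ => ?_⟩
  exact (card_le_card (filter_subset _ _)).trans (by rwa [card_singleton])

theorem IsBoundedColoringOn.isColoring [Fintype V] {m : ℕ} {g : V → Γ}
    (h : H.IsBoundedColoringOn m univ g) : H.IsColoring g ∧ IsBounded m g :=
  ⟨⟨fun v => h.1 v (mem_univ v), fun u v => h.2.1 u (mem_univ u) v (mem_univ v)⟩, h.2.2⟩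

theorem IsBoundedColoringOn.insert [DecidableEq V] {m : ℕ} {S : Finset V} {g : V → Γ}
    (hg : H.IsBoundedColoringOn m S g) {v : V} (hv : v ∉ S) {c : Γ} (hc : c ∈ H.L v)
    (hcm : #{u ∈ S | g u = c} < m) (hconf : ∀ u ∈ S, ¬ H.Adj (u, g u) (v, c)) :
    H.IsBoundedColoringOn m (insert v S) (Function.update g v c) := by
  have hS : ∀ u ∈ S, Function.update g v c u = g u := fun u hu =>
    Function.update_of_ne (ne_of_mem_of_not_mem hu hv) _ _
  obtain ⟨hL, hind, hcount⟩ := hg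
  refine ⟨?_, ?_, fun γ => ?_⟩
  · simp only [mem_insert, forall_eq_or_imp, Function.update_self]
    exact ⟨hc, fun u hu => hS u hu ▸ hL u hu⟩
  · simp only [mem_insert, forall_eq_or_imp, Function.update_self]
    refine ⟨⟨H.not_adj_self _ _ _, fun u hu h => hconf u hu ?_⟩, fun u hu => ⟨?_, fun w hw => ?_⟩⟩
    · rw [hS u hu] at h
      exact H.symm _ _ h
    · rw [hS u hu]
      exact hconf u hu
    · rw [hS u hu, hS w hw]
      exact hind u hu w hw
  · rw [filter_insert, filter_congr fun u hu => by rw [hS u hu]]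
    split_ifs with h
    · rw [Function.update_self] at h
      subst h
      exact (card_insert_le _ _).trans hcm
    · exact hcount γ

section Greedy

variable [DecidableRel G.Adj] {k m : ℕ}

theorem exists_color (hH : H.IsKCover k) {S : Finset V} {g : V → Γ} {v : V}
    (h : #S < m * (k - G.degreeIn S v)) :
    ∃ c ∈ H.L v, #{u ∈ S | g u = c} < m ∧ ∀ u ∈ S, ¬ H.Adj (u, g u) (v, c) := by
  set full := {c ∈ H.L v | m ≤ #{u ∈ S | g u = c}}
  obtain ⟨blocked, hblocked, hmem⟩ := H.exists_blocked_subset S g v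
  have hfull : #full < k - G.degreeIn S v :=
    Nat.lt_of_mul_lt_mul_left ((mul_card_large_fibers_le_card S (H.L v) g m).trans_lt h)
  obtain ⟨c, hc, hcbad⟩ := exists_mem_notMem_of_card_lt_card (s := full ∪ blocked) (t := H.L v)
    (by rw [hH v]; exact (card_union_le _ _).trans_lt (by omega))
  simp only [mem_union, full, mem_filter, not_or, not_and, not_le] at hcbad
  exact ⟨c, hc, hcbad.1 hc, fun u hu hadj => hcbad.2 (hmem c u hu hadj)⟩

theorem exists_extension [DecidableEq V] (hG : G.IsAcyclic) (hH : H.IsKCover k)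
    {S T : Finset V} (hS : G.IsTreeSet S) (hST : S ⊆ T) (hT : #T ≤ m * (k - 1)) {g : V → Γ}
    (hg : H.IsBoundedColoringOn m S g) :
    ∃ g', H.IsBoundedColoringOn m T g' ∧ ∀ x ∈ S, g' x = g x := by
  induction T using Finset.strongInduction with
  | H T ih =>
  rcases (T \ S).eq_empty_or_nonempty with hTS | hne
  · rw [sdiff_eq_empty_iff_subset] at hTS
    exact ⟨g, subset_antisymm hTS hST ▸ hg, fun _ _ => rfl⟩
  obtain ⟨v, hv, hdeg⟩ := hG.exists_mem_sdiff_degreeIn_le_one hS hST hne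
  rw [mem_sdiff] at hv
  obtain ⟨g₁, hg₁, hg₁S⟩ := ih (T.erase v) (erase_ssubset hv.1)
    (fun x hx => mem_erase.mpr ⟨ne_of_mem_of_not_mem hx hv.2, hST hx⟩) (card_erase_le.trans hT)
  have hdeg' : G.degreeIn (T.erase v) v ≤ 1 :=
    (card_le_card (filter_subset_filter _ (erase_subset _ _))).trans hdeg
  have hroom : #(T.erase v) < m * (k - G.degreeIn (T.erase v) v) := by
    rw [card_erase_of_mem hv.1]
    exact (Nat.sub_one_lt_of_lt (card_pos.mpr ⟨v, hv.1⟩)).trans_le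
      (hT.trans (Nat.mul_le_mul_left _ (by omega)))
  obtain ⟨c, hc, hcm, hconf⟩ := exists_color hH hroom
  refine ⟨Function.update g₁ v c, ?_, fun x hx => ?_⟩
  · rw [← insert_erase hv.1]
    exact hg₁.insert (notMem_erase v T) hc hcm hconf
  · rw [Function.update_of_ne (ne_of_mem_of_not_mem hx hv.2), hg₁S x hx]

end Greedy

theorem exists_isColoring_isBounded [Fintype V] [DecidableEq V] {k m : ℕ} (hG : G.IsAcyclic)
    (hH : H.IsKCover k) (hV : Fintype.card V ≤ m * (k - 1)) :
    ∃ f, H.IsColoring f ∧ IsBounded m f := by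
  classical
  have hΓ (v : V) : Nonempty Γ := by
    have hk : 0 < k - 1 := Nat.pos_of_ne_zero fun h0 => by
      have := Fintype.card_pos_iff.mpr ⟨v⟩
      rw [h0, mul_zero] at hV
      omega
    obtain ⟨c, -⟩ := card_pos.mp (by rw [hH v]; omega : 0 < #(H.L v))
    exact ⟨c⟩
  obtain ⟨f, hf, -⟩ := exists_extension hG hH SimpleGraph.isTreeSet_empty (empty_subset univ)
    (by rwa [card_univ]) (H.isBoundedColoringOn_empty m fun v => (hΓ v).some)
  exact ⟨f, hf.isColoring⟩

end DPCover

theorem le_ceil_div_mul_pred {n k : ℕ} (hk : n + 2 ≤ 2 * k) (hkn : k ≠ n) :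
    n ≤ (n + k - 1) / k * (k - 1) := by
  rcases Nat.lt_or_gt_of_ne hkn with hlt | hgt
  · rw [Nat.div_eq_of_lt_le (k := 2) (by omega) (by omega)]
    omega
  · rcases Nat.eq_zero_or_pos n with rfl | hn
    · simp
    · rw [Nat.div_eq_of_lt_le (k := 1) (by omega) (by omega)]
      omega

theorem nonempty_starGraph_iso {V : Type*} [Fintype V] [DecidableEq V] {n : ℕ}
    (hV : Fintype.card V = n) (r : V) : Nonempty (SimpleGraph.starGraph r ≃g starGraph n) := by
  have : Nonempty V := ⟨r⟩
  have : NeZero n := ⟨hV ▸ Fintype.card_ne_zero⟩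
  let e₀ := Fintype.equivFinOfCardEq hV
  let e := e₀.trans (Equiv.swap (e₀ r) 0)
  have he (x : V) : e x = 0 ↔ x = r := by
    rw [← e.apply_eq_iff_eq (y := r)]
    simp [e]
  exact ⟨⟨e, by simp [starGraph, Fin.val_eq_zero_iff, he]⟩⟩

namespace DPCover

variable {V Γ : Type*} [Fintype V] [DecidableEq V] [DecidableEq Γ] {G : SimpleGraph V}

/-- The case `k = n` of the theorem, where a `⌈n/k⌉`-bounded colouring is an injective one. -/
structure IsCritical (H : DPCover G Γ) (k : ℕ) : Prop where
  acyclic : G.IsAcyclic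
  isKCover : H.IsKCover k
  card_eq : Fintype.card V = k
  not_exists_injective : ¬ ∃ f, H.IsColoring f ∧ IsBounded 1 f

namespace IsCritical

variable {H : DPCover G Γ} {k : ℕ}

theorem exists_extension_erase {G' : SimpleGraph V} [DecidableRel G'.Adj] (hC : H.IsCritical k)
    (hle : G ≤ G') (hG' : G'.IsAcyclic) {S : Finset V} (hS : G'.IsTreeSet S) {z : V}
    (hSz : S ⊆ univ.erase z) {g : V → Γ} (hg : H.IsBoundedColoringOn 1 S g) :
    ∃ g', H.IsBoundedColoringOn 1 (univ.erase z) g' ∧ ∀ x ∈ S, g' x = g x :=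
  exists_extension (H := H.mono hle) hG' hC.isKCover hS hSz
    (by rw [card_erase_of_mem (mem_univ z), card_univ, hC.card_eq, one_mul]) hg

theorem image_subset_and_exists_adj_notMem (hC : H.IsCritical k) {z x : V}
    (hz : ∀ u, G.Adj u z → u = x) {g : V → Γ} (hg : H.IsBoundedColoringOn 1 (univ.erase z) g) :
    (univ.erase z).image g ⊆ H.L z ∧ ∃ c ∉ (univ.erase z).image g, H.Adj (x, g x) (z, c) := by
  set I := (univ.erase z).image g
  have hI : #I = k - 1 := by
    rw [card_image_of_injOn, card_erase_of_mem (mem_univ z), card_univ, hC.card_eq]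
    intro u hu v hv huv
    exact card_le_one.mp (hg.2.2 (g u)) u (mem_filter.mpr ⟨hu, rfl⟩) v
      (mem_filter.mpr ⟨hv, huv.symm⟩)
  have hblocked : ∀ c ∈ H.L z \ I, H.Adj (x, g x) (z, c) := by
    intro c hc
    rw [mem_sdiff] at hc
    by_contra hn
    refine hC.not_exists_injective ⟨Function.update g z c, IsBoundedColoringOn.isColoring ?_⟩
    rw [← insert_erase (mem_univ z)]
    refine hg.insert (notMem_erase z univ) hc.1 ?_ fun u hu hadj => ?_
    · rw [Nat.lt_one_iff, card_eq_zero, filter_eq_empty_iff]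
      exact fun u hu h => hc.2 (h ▸ mem_image_of_mem g hu)
    · exact hn (hz u (H.adj_sub _ _ _ _ hadj).1 ▸ hadj)
  have hle : #(H.L z \ I) ≤ 1 := card_le_one.mpr fun c hc c' hc' =>
    H.matching _ _ _ _ _ (hblocked c hc) (hblocked c' hc')
  have hk : 0 < k := hC.card_eq ▸ Fintype.card_pos_iff.mpr ⟨z⟩
  have hge := le_card_sdiff I (H.L z)
  have hinter := card_sdiff_add_card_inter (H.L z) I
  rw [hC.isKCover z, hI] at hge
  rw [hC.isKCover z] at hinter
  obtain ⟨c, hc⟩ := card_pos.mp (by omega : 0 < #(H.L z \ I))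
  refine ⟨?_, c, (mem_sdiff.mp hc).2, hblocked c hc⟩
  rw [← inter_eq_right]
  exact eq_of_subset_of_card_le inter_subset_right (by omega)

theorem exists_adj (hC : H.IsCritical k) (z : V) : ∃ x, G.Adj x z := by
  classical
  by_contra! h
  obtain ⟨c, -⟩ := card_pos.mp (hC.isKCover z ▸ hC.card_eq ▸ Fintype.card_pos_iff.mpr ⟨z⟩)
  obtain ⟨g, hg, -⟩ := hC.exists_extension_erase le_rfl hC.acyclic SimpleGraph.isTreeSet_empty
    (empty_subset (univ.erase z)) (H.isBoundedColoringOn_empty 1 fun _ => c)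
  -- All neighbours of an isolated `z` are equal to `z`, so the blocking node is a loop.
  obtain ⟨-, c, -, hc⟩ :=
    hC.image_subset_and_exists_adj_notMem (x := z) (fun u hu => absurd hu (h u)) hg
  exact H.not_adj_self _ _ _ hc

theorem exists_leaf [Nonempty V] (hC : H.IsCritical k) : ∃ z w, ∀ u, G.Adj u z ↔ u = w := by
  classical
  obtain ⟨z, -, hz⟩ := hC.acyclic.exists_mem_sdiff_degreeIn_le_one SimpleGraph.isTreeSet_empty
    (empty_subset univ) (by simp)
  obtain ⟨w, hw⟩ := hC.exists_adj z
  exact ⟨z, w, fun u => ⟨fun hu => card_le_one.mp hz u (by simpa using hu) w (by simpa using hw),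
    fun h => h ▸ hw⟩⟩

theorem L_eq (hC : H.IsCritical k) {z₀ w : V} (hz₀ : ∀ u, G.Adj u z₀ → u = w) (u : V) :
    H.L u = H.L z₀ := by
  classical
  rcases eq_or_ne u z₀ with rfl | hu
  · rfl
  refine eq_of_subset_of_card_le (fun α hα => ?_) (by rw [hC.isKCover, hC.isKCover])
  obtain ⟨g, hg, hgu⟩ := hC.exists_extension_erase le_rfl hC.acyclic
    (SimpleGraph.isTreeSet_singleton u) (by simpa using hu)
    (isBoundedColoringOn_singleton (g := fun _ => α) one_pos hα)
  exact (hC.image_subset_and_exists_adj_notMem hz₀ hg).1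
    (mem_image.mpr ⟨u, by simpa using hu, hgu u (mem_singleton_self u)⟩)

theorem exists_adj_ne (hC : H.IsCritical k) {z x : V} (hz : ∀ u, G.Adj u z → u = x)
    (hxz : x ≠ z) {a : Γ} (ha : a ∈ H.L x) : ∃ d, H.Adj (x, a) (z, d) ∧ d ≠ a := by
  classical
  obtain ⟨g, hg, hgx⟩ := hC.exists_extension_erase le_rfl hC.acyclic
    (SimpleGraph.isTreeSet_singleton x) (by simpa using hxz)
    (isBoundedColoringOn_singleton (g := fun _ => a) one_pos ha)
  obtain ⟨-, d, hd, hadj⟩ := hC.image_subset_and_exists_adj_notMem hz hg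
  have hgx : g x = a := hgx x (mem_singleton_self x)
  refine ⟨d, hgx ▸ hadj, fun hda => hd ?_⟩
  exact mem_image.mpr ⟨x, by simpa using hxz, hgx.trans hda.symm⟩

theorem ne_of_adj_leaf {G' : SimpleGraph V} [DecidableRel G'.Adj] (hC : H.IsCritical k)
    {z₀ w : V} (hz₀ : ∀ u, G.Adj u z₀ → u = w) (hle : G ≤ G') (hG' : G'.IsAcyclic)
    {S : Finset V} (hS : G'.IsTreeSet S) (hSz : S ⊆ univ.erase z₀) {g : V → Γ}
    (hg : H.IsBoundedColoringOn 1 S g) (hw : w ∈ S) {d : Γ} (hd : H.Adj (w, g w) (z₀, d))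
    {y : V} (hy : y ∈ S) : g y ≠ d := by
  obtain ⟨g', hg', hg'S⟩ := hC.exists_extension_erase hle hG' hS hSz hg
  obtain ⟨-, c, hc, hadj⟩ := hC.image_subset_and_exists_adj_notMem hz₀ hg'
  rw [hg'S w hw] at hadj
  rw [H.matching _ _ _ _ _ hd hadj, ← hg'S y hy]
  exact fun h => hc (mem_image.mpr ⟨y, hSz hy, h⟩)

theorem adj_of_adj_leaf {G' : SimpleGraph V} [DecidableRel G'.Adj] (hC : H.IsCritical k)
    {z₀ w : V} (hz₀ : ∀ u, G.Adj u z₀ ↔ u = w) (hle : G ≤ G') (hG' : G'.IsAcyclic) {y : V}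
    (hwy : G'.Adj w y) (hy : y ≠ z₀) {a d : Γ} (had : H.Adj (w, a) (z₀, d)) :
    H.Adj (w, a) (y, d) := by
  by_contra hn
  have hz₀' (u : V) (hu : G.Adj u z₀) : u = w := (hz₀ u).1 hu
  have hwz₀ : w ≠ z₀ := ((hz₀ w).2 rfl).ne
  have ha : a ∈ H.L w := (H.adj_sub _ _ _ _ had).2.1
  obtain ⟨d', hd', hd'a⟩ := hC.exists_adj_ne hz₀' hwz₀ ha
  have hda : d ≠ a := H.matching _ _ _ _ _ had hd' ▸ hd'a
  have hd : d ∈ H.L y := hC.L_eq hz₀' y ▸ (H.adj_sub _ _ _ _ had).2.2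
  have hwy' : w ∉ ({y} : Finset V) := by simpa using hwy.ne
  have hg := (isBoundedColoringOn_singleton (g := fun _ => d) one_pos hd).insert hwy' ha
    (by simp [hda]) (by simpa [H.adj_comm] using hn)
  refine hC.ne_of_adj_leaf hz₀' hle hG'
    ((SimpleGraph.isTreeSet_singleton y).insert (mem_singleton_self y) hwy' hwy.symm) ?_ hg
    (mem_insert_self w {y}) (by simpa using had) (mem_insert_of_mem (mem_singleton_self y)) ?_
  · simp [insert_subset_iff, hwz₀, hy]
  · simp [Function.update_of_ne hwy.ne.symm]

theorem eq_center_of_adj_of_adj (hC : H.IsCritical k) {z₀ w : V}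
    (hz₀ : ∀ u, G.Adj u z₀ ↔ u = w) {c₁ c₂ : V} (h₁ : G.Adj w c₁) (hc₁ : c₁ ≠ z₀)
    (h₂ : G.Adj c₁ c₂) : c₂ = w := by
  classical
  by_contra hc₂
  have hz₀' (u : V) (hu : G.Adj u z₀) : u = w := (hz₀ u).1 hu
  have hwz₀ : w ≠ z₀ := ((hz₀ w).2 rfl).ne
  have hc₂z₀ : c₂ ≠ z₀ := by
    rintro rfl
    exact h₁.ne (hz₀' c₁ h₂).symm
  have hwc₂ : ¬ G.Adj w c₂ := fun h =>
    hC.acyclic.cliqueFree le_rfl {w, c₁, c₂} (SimpleGraph.is3Clique_triple_iff.mpr ⟨h₁, h, h₂⟩)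
  have hk : 3 < k := by
    have := card_le_univ ({z₀, w, c₁, c₂} : Finset V)
    rw [hC.card_eq, card_insert_of_notMem, card_insert_of_notMem, card_pair h₂.ne] at this
    · exact this
    · simp [h₁.ne, Ne.symm hc₂]
    · simp [hwz₀.symm, hc₁.symm, hc₂z₀.symm]
  obtain ⟨a, ha⟩ := card_pos.mp (hC.isKCover w ▸ (by omega : 0 < k))
  obtain ⟨d, hd, hda⟩ := hC.exists_adj_ne hz₀' hwz₀ ha
  have hd₁ : H.Adj (w, a) (c₁, d) := hC.adj_of_adj_leaf hz₀ le_rfl hC.acyclic h₁ hc₁ hd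
  obtain ⟨b, hb, hba, hbd, hbc₂⟩ :=
    H.exists_mem_ne_ne_not_adj (u := c₂) d a d (hC.isKCover c₁ ▸ hk)
  -- Colour `c₂, c₁, w` with `d, b, a`; the only `H`-edge at `(w, a)` towards `c₁` ends at `d`.
  have hdc₂ : d ∈ H.L c₂ := hC.L_eq hz₀' c₂ ▸ (H.adj_sub _ _ _ _ hd).2.2
  have hg₁ := (isBoundedColoringOn_singleton (g := fun _ => d) one_pos hdc₂).insert
    (v := c₁) (by simpa using h₂.ne) hb (by simp [Ne.symm hbd]) (by simpa using hbc₂)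
  have hw : w ∉ ({c₁, c₂} : Finset V) := by simp [h₁.ne, Ne.symm hc₂]
  have hg₂ := hg₁.insert hw ha
    (by simp [filter_insert, Function.update_of_ne h₂.ne.symm, hba, hda]) (by
      simp only [mem_insert, mem_singleton, forall_eq_or_imp, forall_eq, Function.update_self,
        Function.update_of_ne h₂.ne.symm]
      exact ⟨fun h => hbd (H.matching _ _ _ _ _ (H.symm _ _ h) hd₁),
        fun h => hwc₂ (H.adj_sub _ _ _ _ h).1.symm⟩)
  have hS := ((SimpleGraph.isTreeSet_singleton c₂).insert (mem_singleton_self c₂)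
    (by simpa using h₂.ne) h₂.symm).insert (mem_insert_self c₁ {c₂}) hw h₁.symm
  refine hC.ne_of_adj_leaf hz₀' le_rfl hC.acyclic hS ?_ hg₂ (mem_insert_self _ _)
    (by simpa using hd) (y := c₂) (by simp) ?_
  · simp [insert_subset_iff, hwz₀, hc₁, hc₂z₀]
  · simp [Function.update_of_ne hc₂, Function.update_of_ne h₂.ne.symm]

theorem adj_center (hC : H.IsCritical k) {z₀ w : V} (hz₀ : ∀ u, G.Adj u z₀ ↔ u = w) {y : V}
    (hy : y ≠ w) : G.Adj w y := by
  classical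
  by_contra hwy
  have hwz₀ : w ≠ z₀ := ((hz₀ w).2 rfl).ne
  have hreach (x : V) (hx : Relation.ReflTransGen G.Adj w x) : x = w ∨ G.Adj w x := by
    induction hx with
    | refl => exact .inl rfl
    | @tail x x' _ hxx' ih =>
      rcases ih with rfl | hwx
      · exact .inr hxx'
      · rcases eq_or_ne x z₀ with rfl | hxz₀
        · exact .inl ((hz₀ x').1 hxx'.symm)
        · exact .inl (hC.eq_center_of_adj_of_adj hz₀ hwx hxz₀ hxx')
  -- `y` is not reachable from `w`, so `wy` can be added as an edge.
  have hacyc := hC.acyclic.sup_edge_of_not_reachable fun h =>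
    (hreach y ((SimpleGraph.reachable_iff_reflTransGen w y).mp h)).elim hy hwy
  have hwy' : (G ⊔ SimpleGraph.edge w y).Adj w y := by simp [SimpleGraph.edge_adj, hy.symm]
  have hyz₀ : y ≠ z₀ := by
    rintro rfl
    exact hwy ((hz₀ w).2 rfl)
  obtain ⟨a, ha⟩ := card_pos.mp (hC.isKCover w ▸ hC.card_eq ▸ Fintype.card_pos_iff.mpr ⟨w⟩)
  obtain ⟨d, hd, -⟩ := hC.exists_adj_ne (fun u hu => (hz₀ u).1 hu) hwz₀ ha
  exact hwy (H.adj_sub _ _ _ _ (hC.adj_of_adj_leaf hz₀ le_sup_left hacyc hwy' hyz₀ hd)).1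

theorem eq_starGraph (hC : H.IsCritical k) {z₀ w : V} (hz₀ : ∀ u, G.Adj u z₀ ↔ u = w) :
    G = SimpleGraph.starGraph w := by
  ext u v
  rw [SimpleGraph.starGraph_adj]
  refine ⟨fun h => ⟨h.ne, ?_⟩, ?_⟩
  · by_contra! huv
    rcases eq_or_ne u z₀ with rfl | hu
    · exact huv.2 ((hz₀ v).1 h.symm)
    · exact huv.2 (hC.eq_center_of_adj_of_adj hz₀ (hC.adj_center hz₀ huv.1) hu h)
  · rintro ⟨huv, rfl | rfl⟩
    · exact hC.adj_center hz₀ huv.symm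
    · exact (hC.adj_center hz₀ huv).symm

theorem adj_center_iff (hC : H.IsCritical k) {z₀ w : V} (hz₀ : ∀ u, G.Adj u z₀ ↔ u = w)
    {y : V} (hy : y ≠ w) {α β : Γ} : H.Adj (w, β) (y, α) ↔ H.Adj (w, β) (z₀, α) := by
  classical
  rcases eq_or_ne y z₀ with rfl | hyz₀
  · rfl
  have hwy := hC.adj_center hz₀ hy
  refine ⟨fun h => ?_, hC.adj_of_adj_leaf hz₀ le_rfl hC.acyclic hwy hyz₀⟩
  obtain ⟨d, hd, -⟩ := hC.exists_adj_ne (fun u hu => (hz₀ u).1 hu) ((hz₀ w).2 rfl).ne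
    (H.adj_sub _ _ _ _ h).2.1
  rwa [H.matching _ _ _ _ _ h (hC.adj_of_adj_leaf hz₀ le_rfl hC.acyclic hwy hyz₀ hd)]

theorem exists_adj_ne_of_adj (hC : H.IsCritical k) {z₀ w : V} (hz₀ : ∀ u, G.Adj u z₀ ↔ u = w)
    {u v : V} (huv : G.Adj u v) {α : Γ} (hα : α ∈ H.L u) :
    ∃ β, H.Adj (u, α) (v, β) ∧ β ≠ α := by
  have hcenter (y : V) (hy : y ≠ w) (α : Γ) (hα : α ∈ H.L w) :
      ∃ β, H.Adj (w, α) (y, β) ∧ β ≠ α := by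
    obtain ⟨d, hd, hdα⟩ := hC.exists_adj_ne (fun u hu => (hz₀ u).1 hu) ((hz₀ w).2 rfl).ne hα
    exact ⟨d, (hC.adj_center_iff hz₀ hy).2 hd, hdα⟩
  rw [hC.eq_starGraph hz₀, SimpleGraph.starGraph_adj] at huv
  obtain ⟨huv, rfl | rfl⟩ := huv
  · exact hcenter v huv.symm α hα
  obtain ⟨β, hβ⟩ := H.exists_adj_of_forall_exists_adj
    (fun β hβ => (hcenter u huv β hβ).imp fun _ => And.left)
    (by rw [hC.isKCover, hC.isKCover]) α hα
  obtain ⟨γ, hγ, hγβ⟩ := hcenter u huv β (H.adj_sub _ _ _ _ hβ).2.1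
  exact ⟨β, H.symm _ _ hβ, fun h => hγβ (H.matching _ _ _ _ _ hγ hβ ▸ h.symm)⟩

end IsCritical

end DPCover

/-- Let `G` be an `n`-vertex forest, `2k ≥ n + 2`, and `H` a `k`-cover of `G`.
If `G` has no `⌈n/k⌉`-bounded `H`-coloring then: (a) `k = n` and `G ≅ K_{1,n-1}`;
(b) `H` is plain and every `H(u,v)` is a derangement; (c) for every vertex `x`
and neighbors `y, z` of `x`, `H(y,x) = H(z,x)`. -/
theorem forest_no_bounded_coloring_structure {V : Type*} [Fintype V] [DecidableEq V]
    (n k : ℕ) (hcard : Fintype.card V = n) (hk : n + 2 ≤ 2 * k)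
    (G : SimpleGraph V) (hforest : G.IsAcyclic)
    (H : DPCover G ℕ) (hH : H.IsKCover k)
    (hno : ¬ ∃ f : V → ℕ, H.IsColoring f ∧ IsBounded ((n + k - 1) / k) f) :
    (k = n ∧ Nonempty (G ≃g starGraph n)) ∧
    (H.IsPlain k ∧ ∀ u v, G.Adj u v → H.IsDerangement u v) ∧
    (∀ x y z : V, G.Adj y x → G.Adj z x →
      ∀ α β, (H.Adj (y, α) (x, β) ↔ H.Adj (z, α) (x, β))) := by
  have hkn : k = n := by
    by_contra hkn
    exact hno (H.exists_isColoring_isBounded hforest hH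
      (hcard.symm ▸ le_ceil_div_mul_pred hk hkn))
  subst hkn
  have hC : H.IsCritical k :=
    ⟨hforest, hH, hcard, by rwa [Nat.div_eq_of_lt_le (k := 1) (by omega) (by omega)] at hno⟩
  have : Nonempty V := Fintype.card_pos_iff.mp (by omega)
  obtain ⟨z₀, w, hz₀⟩ := hC.exists_leaf
  have hL := hC.L_eq fun u hu => (hz₀ u).1 hu
  have hstar := hC.eq_starGraph hz₀
  refine ⟨⟨rfl, hstar ▸ nonempty_starGraph_iso hcard w⟩, ⟨⟨H.L z₀, hH z₀, hL⟩, fun u v huv =>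
    ⟨by rw [hL u, hL v], fun α hα => hC.exists_adj_ne_of_adj hz₀ huv hα⟩⟩, ?_⟩
  intro x y z hyx hzx α β
  rw [hstar, SimpleGraph.starGraph_adj] at hyx hzx
  rcases eq_or_ne x w with rfl | hxw
  · rw [H.adj_comm, hC.adj_center_iff hz₀ hyx.1, ← hC.adj_center_iff hz₀ hzx.1, H.adj_comm]
  · rw [hyx.2.resolve_right hxw, hzx.2.resolve_right hxw]
end

section
/- If G is a forest with at least 5 vertices that is not a star, then G has two nonadjacent vertices l_1 and l_2, each of degree at most 1, such that neither G − l_1 nor G − l_2 is a star. -/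
/-- `G` is a star `K_{1,t}` (`t ≥ 0`): some center vertex is adjacent to exactly
the other vertices, and there are no other edges. -/
def IsStar {V : Type*} (G : SimpleGraph V) : Prop :=
  ∃ c : V, ∀ a b : V, G.Adj a b ↔ ((a = c ∧ b ≠ c) ∨ (b = c ∧ a ≠ c))

open SimpleGraph

private lemma star_induce_elim {V : Type*} {G : SimpleGraph V} {s : Set V}
    (h : IsStar (G.induce s)) :
    ∃ c ∈ s, ∀ a b : V, a ∈ s → b ∈ s →
      (G.Adj a b ↔ ((a = c ∧ b ≠ c) ∨ (b = c ∧ a ≠ c))) := by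
  obtain ⟨⟨c, hc⟩, hstar⟩ := h
  refine ⟨c, hc, fun a b ha hb => ?_⟩
  have := hstar ⟨a, ha⟩ ⟨b, hb⟩
  simpa [Subtype.ext_iff] using this

private lemma deg_le_one_unique {V : Type*} [Fintype V] [DecidableEq V]
    {G : SimpleGraph V} [DecidableRel G.Adj] {u x : V}
    (h : ∀ w, G.Adj u w → w = x) : G.degree u ≤ 1 := by
  have hsub : G.neighborFinset u ⊆ {x} := by
    intro w hw
    rw [mem_neighborFinset] at hw
    simp [h w hw]
  simpa using Finset.card_le_card hsub

private lemma endpoint_deg {V : Type*} [Fintype V] [DecidableEq V]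
    (G : SimpleGraph V) [DecidableRel G.Adj] (hforest : G.IsAcyclic)
    {u v : V} (p : G.Walk u v) (hp : p.IsPath)
    (hmax : ∀ (w x : V) (q : G.Walk w x), q.IsPath → q.length ≤ p.length) :
    G.degree u ≤ 1 := by
  cases p with
  | nil =>
    -- any neighbor extends the nil path, contradicting maximality
    refine deg_le_one_unique (x := u) (fun w hw => ?_)
    exact absurd (hmax w u (Walk.cons hw.symm Walk.nil) (Path.singleton hw.symm).2) (by simp)
  | @cons _ u' _ h q =>
    refine deg_le_one_unique (x := u') (fun w hw => ?_)
    by_cases hws : w ∈ (Walk.cons h q).support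
    · -- the path from u to w inside p must be the single edge u-w
      have ht : ((Walk.cons h q).takeUntil w hws).IsPath := hp.takeUntil hws
      have huniq := hforest.path_unique ⟨_, ht⟩ (Path.singleton hw)
      have ht' : ((Walk.cons h q).takeUntil w hws) = Walk.cons hw Walk.nil :=
        Subtype.ext_iff.mp huniq
      have hspec := (Walk.cons h q).take_spec hws
      rw [ht'] at hspec
      have h1 := congrArg (fun r : G.Walk u v => r.getVert 1) hspec
      simp only [Walk.cons_append, Walk.nil_append] at h1
      rw [Walk.getVert_cons_succ, Walk.getVert_cons_succ, Walk.getVert_zero, Walk.getVert_zero] at h1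
      exact h1
    · -- extend the path, contradicting maximality
      have : (Walk.cons hw.symm (Walk.cons h q)).IsPath := hp.cons hws
      have := hmax _ _ _ this
      simp at this

private lemma two_leaves {V : Type*} [Fintype V] [DecidableEq V]
    (G : SimpleGraph V) [DecidableRel G.Adj] (hforest : G.IsAcyclic)
    (hn : 3 ≤ Fintype.card V) :
    ∃ u v : V, u ≠ v ∧ ¬ G.Adj u v ∧ G.degree u ≤ 1 ∧ G.degree v ≤ 1 := by
  classical
  obtain ⟨v0⟩ : Nonempty V := Fintype.card_pos_iff.mp (by omega)
  set P : ℕ → Prop := fun n => ∃ (u v : V) (p : G.Walk u v), p.IsPath ∧ p.length = n with hPdef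
  have hP0 : P 0 := ⟨v0, v0, Walk.nil, Walk.IsPath.nil, rfl⟩
  set N := Nat.findGreatest P (Fintype.card V) with hNdef
  have hPN : P N := Nat.findGreatest_spec (Nat.zero_le _) hP0
  have hmaxN : ∀ (u v : V) (p : G.Walk u v), p.IsPath → p.length ≤ N := by
    intro u v p hp
    exact Nat.le_findGreatest hp.length_lt.le ⟨u, v, p, hp, rfl⟩
  obtain ⟨u, v, p, hp, hplen⟩ := hPN
  by_cases hN2 : 2 ≤ N
  · -- endpoints of a maximal path
    have hmax' : ∀ (w x : V) (q : G.Walk w x), q.IsPath → q.length ≤ p.length := by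
      intro w x q hq; rw [hplen]; exact hmaxN w x q hq
    have hdu : G.degree u ≤ 1 := endpoint_deg G hforest p hp hmax'
    have hmaxrev : ∀ (w x : V) (q : G.Walk w x), q.IsPath → q.length ≤ p.reverse.length := by
      intro w x q hq; rw [Walk.length_reverse, hplen]; exact hmaxN w x q hq
    have hdv : G.degree v ≤ 1 := endpoint_deg G hforest p.reverse hp.reverse hmaxrev
    have huv : u ≠ v := by
      rintro rfl
      rw [(Walk.isPath_iff_eq_nil (p := p)).mp hp] at hplen
      simp at hplen; omega
    refine ⟨u, v, huv, fun hadj => ?_, hdu, hdv⟩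
    have := hforest.path_unique ⟨p, hp⟩ (Path.singleton hadj)
    have := congrArg (fun q : G.Path u v => (q : G.Walk u v).length) this
    simp [hplen] at this
    omega
  · -- all degrees are at most 1
    have hdeg : ∀ a : V, G.degree a ≤ 1 := by
      intro a
      by_contra hd
      rw [not_le] at hd
      obtain ⟨b, hb, c, hc, hbc⟩ := Finset.one_lt_card.mp hd
      rw [mem_neighborFinset] at hb hc
      have hpath : (Walk.cons hb.symm (Walk.cons hc Walk.nil)).IsPath := by
        rw [Walk.isPath_def]
        simp [hb.ne', hc.ne, hbc]
      have := hmaxN _ _ _ hpath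
      simp at this
      omega
    obtain ⟨a, -, b, -, hab⟩ :=
      Finset.one_lt_card.mp (show 1 < (Finset.univ : Finset V).card by simpa using by omega)
    by_cases h : G.Adj a b
    · have hcard : (Finset.univ \ {a, b} : Finset V).Nonempty := by
        rw [← Finset.card_pos, Finset.card_sdiff_of_subset (by simp)]
        have h2 : ({a, b} : Finset V).card ≤ 2 := Finset.card_le_two
        simp only [Finset.card_univ]
        omega
      obtain ⟨c, hc⟩ := hcard
      simp only [Finset.mem_sdiff, Finset.mem_insert, Finset.mem_singleton] at hc
      have hca : c ≠ a := fun h' => hc.2 (Or.inl h')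
      have hcb : c ≠ b := fun h' => hc.2 (Or.inr h')
      have hnac : ¬ G.Adj a c := by
        intro h'
        have h1 : 1 < (G.neighborFinset a).card := by
          refine Finset.one_lt_card.mpr ⟨b, ?_, c, ?_, fun e => hcb e.symm⟩
          · simpa [mem_neighborFinset] using h
          · simpa [mem_neighborFinset] using h'
        have := hdeg a
        rw [← card_neighborFinset_eq_degree] at this
        omega
      exact ⟨a, c, hca.symm, hnac, hdeg a, hdeg c⟩
    · exact ⟨a, b, hab, h, hdeg a, hdeg b⟩

private lemma notStar_of_isolated {V : Type*} {G : SimpleGraph V} (l y w : V)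
    (hl0 : ∀ x, ¬ G.Adj l x) (hly : l ≠ y) (hwl : w ≠ l) (hwy : w ≠ y) :
    ¬ IsStar (G.induce {y}ᶜ) := by
  intro hS
  obtain ⟨d, hdmem, hd⟩ := star_induce_elim hS
  by_cases hdl : d = l
  · subst hdl
    exact hl0 w ((hd d w hdmem (by simpa using hwy)).mpr (Or.inl ⟨rfl, hwl⟩))
  · have : G.Adj d l :=
      (hd d l hdmem (by simpa using hly)).mpr (Or.inl ⟨rfl, fun e => hdl e.symm⟩)
    exact hl0 d this.symm

/-- If `G` is a forest with at least 5 vertices that is not a star, then `G` has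
two nonadjacent vertices `l₁, l₂` of degree at most 1 such that neither `G - l₁`
nor `G - l₂` is a star. -/
theorem forest_two_good_ends {V : Type*} [Fintype V] [DecidableEq V]
    (G : SimpleGraph V) [DecidableRel G.Adj]
    (hforest : G.IsAcyclic) (hn : 5 ≤ Fintype.card V) (hns : ¬ IsStar G) :
    ∃ l₁ l₂ : V, l₁ ≠ l₂ ∧ ¬ G.Adj l₁ l₂ ∧
      G.degree l₁ ≤ 1 ∧ G.degree l₂ ≤ 1 ∧
      ¬ IsStar (G.induce {l₁}ᶜ) ∧ ¬ IsStar (G.induce {l₂}ᶜ) := by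
  classical
  by_cases hbad : ∃ l : V, G.degree l ≤ 1 ∧ IsStar (G.induce {l}ᶜ)
  case neg =>
    push_neg at hbad
    obtain ⟨u, v, huv, hadj, hdu, hdv⟩ := two_leaves G hforest (by omega)
    exact ⟨u, v, huv, hadj, hdu, hdv, hbad u hdu, hbad v hdv⟩
  case pos =>
  obtain ⟨l, hdl, hstar⟩ := hbad
  obtain ⟨c, hcmem, hc⟩ := star_induce_elim hstar
  have hcl : c ≠ l := by simpa using hcmem
  have hc' : ∀ a b : V, a ≠ l → b ≠ l →
      (G.Adj a b ↔ (a = c ∧ b ≠ c) ∨ (b = c ∧ a ≠ c)) := by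
    intro a b ha hb; exact hc a b (by simpa using ha) (by simpa using hb)
  by_cases hlx : ∃ x, G.Adj l x
  · -- l has a unique neighbor x
    obtain ⟨x, hlx⟩ := hlx
    have hxl : x ≠ l := hlx.ne'
    have huniq : ∀ w, G.Adj l w → w = x := by
      intro w hw
      by_contra hne
      have h1 : 1 < (G.neighborFinset l).card := by
        refine Finset.one_lt_card.mpr ⟨w, ?_, x, ?_, hne⟩
        · simpa [mem_neighborFinset] using hw
        · simpa [mem_neighborFinset] using hlx
      rw [card_neighborFinset_eq_degree] at h1
      omega
    have hxc : x ≠ c := by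
      intro hxc
      subst hxc
      refine hns ⟨x, fun a b => ?_⟩
      have hlx' : l ≠ x := hlx.ne
      by_cases ha : a = l <;> by_cases hb : b = l
      · subst ha; subst hb; simp [hlx']
      · subst ha
        constructor
        · intro hab
          exact Or.inr ⟨huniq b hab, hlx'⟩
        · rintro (⟨rfl, -⟩ | ⟨rfl, -⟩)
          · exact absurd rfl hlx'
          · exact hlx
      · subst hb
        constructor
        · intro hab
          exact Or.inl ⟨huniq a hab.symm, hlx'⟩
        · rintro (⟨rfl, -⟩ | ⟨rfl, -⟩)
          · exact hlx.symm
          · exact absurd rfl hlx'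
      · exact hc' a b ha hb
    -- pick two fresh vertices
    obtain ⟨y, hy, z, hz, hyz⟩ := Finset.one_lt_card.mp
      (show 1 < ((Finset.univ : Finset V) \ {l, c, x}).card by
        rw [Finset.card_sdiff_of_subset (by simp)]
        have h3 : ({l, c, x} : Finset V).card ≤ 3 := Finset.card_insert_le _ _ |>.trans
          (by have := Finset.card_insert_le c {x}; simp at this ⊢; omega)
        simp only [Finset.card_univ]
        omega)
    simp only [Finset.mem_sdiff, Finset.mem_insert, Finset.mem_singleton, not_or] at hy hz
    obtain ⟨-, hyl, hyc, hyx⟩ := hy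
    obtain ⟨-, hzl, hzc, hzx⟩ := hz
    have key : ∀ y z : V, y ≠ l → y ≠ c → y ≠ x → z ≠ l → z ≠ c → z ≠ x → z ≠ y →
        ¬ IsStar (G.induce {y}ᶜ) := by
      intro y z hyl hyc hyx hzl hzc hzx hzy hS
      obtain ⟨d, hdmem, hd⟩ := star_induce_elim hS
      by_cases hdl : d = l
      · subst hdl
        have hAc : G.Adj d c :=
          (hd d c hdmem (by simpa using fun e => hyc e.symm)).mpr (Or.inl ⟨rfl, hcl⟩)
        exact hxc ((huniq c hAc).symm)
      · have hAdl : G.Adj d l :=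
          (hd d l hdmem (by simpa using fun e => hyl e.symm)).mpr
            (Or.inl ⟨rfl, fun e => hdl e.symm⟩)
        have hdx : d = x := huniq d hAdl.symm
        subst hdx
        have hAxz : G.Adj d z :=
          (hd d z hdmem (by simpa using hzy)).mpr (Or.inl ⟨rfl, hzx⟩)
        rw [hc' d z hxl hzl] at hAxz
        rcases hAxz with ⟨h1, -⟩ | ⟨h1, -⟩
        · exact hxc h1
        · exact hzc h1
    have hdy : G.degree y ≤ 1 := by
      refine deg_le_one_unique (x := c) (fun w hw => ?_)
      by_cases hwl : w = l
      · subst hwl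
        exact absurd (huniq y hw.symm) hyx
      · rcases (hc' y w hyl hwl).mp hw with ⟨h1, -⟩ | ⟨h1, -⟩
        · exact absurd h1 hyc
        · exact h1
    have hdz : G.degree z ≤ 1 := by
      refine deg_le_one_unique (x := c) (fun w hw => ?_)
      by_cases hwl : w = l
      · subst hwl
        exact absurd (huniq z hw.symm) hzx
      · rcases (hc' z w hzl hwl).mp hw with ⟨h1, -⟩ | ⟨h1, -⟩
        · exact absurd h1 hzc
        · exact h1
    refine ⟨y, z, hyz, ?_, hdy, hdz,
      key y z hyl hyc hyx hzl hzc hzx (Ne.symm hyz),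
      key z y hzl hzc hzx hyl hyc hyx hyz⟩
    rw [hc' y z hyl hzl]
    rintro (⟨h1, -⟩ | ⟨h1, -⟩)
    · exact hyc h1
    · exact hzc h1
  · -- l is isolated
    push_neg at hlx
    have hl0 : ∀ w, ¬ G.Adj l w := hlx
    obtain ⟨y, hy, z, hz, hyz⟩ := Finset.one_lt_card.mp
      (show 1 < ((Finset.univ : Finset V) \ {l, c}).card by
        rw [Finset.card_sdiff_of_subset (by simp)]
        have h2 : ({l, c} : Finset V).card ≤ 2 := Finset.card_le_two
        simp only [Finset.card_univ]
        omega)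
    simp only [Finset.mem_sdiff, Finset.mem_insert, Finset.mem_singleton, not_or] at hy hz
    obtain ⟨-, hyl, hyc⟩ := hy
    obtain ⟨-, hzl, hzc⟩ := hz
    have hdy : G.degree y ≤ 1 := by
      refine deg_le_one_unique (x := c) (fun w hw => ?_)
      by_cases hwl : w = l
      · subst hwl; exact absurd hw.symm (hl0 y)
      · rcases (hc' y w hyl hwl).mp hw with ⟨h1, -⟩ | ⟨h1, -⟩
        · exact absurd h1 hyc
        · exact h1
    have hdz : G.degree z ≤ 1 := by
      refine deg_le_one_unique (x := c) (fun w hw => ?_)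
      by_cases hwl : w = l
      · subst hwl; exact absurd hw.symm (hl0 z)
      · rcases (hc' z w hzl hwl).mp hw with ⟨h1, -⟩ | ⟨h1, -⟩
        · exact absurd h1 hzc
        · exact h1
    refine ⟨y, z, hyz, ?_, hdy, hdz,
      notStar_of_isolated l y c hl0 (Ne.symm hyl) hcl (fun e => hyc e.symm),
      notStar_of_isolated l z c hl0 (Ne.symm hzl) hcl (fun e => hzc e.symm)⟩
    rw [hc' y z hyl hzl]
    rintro (⟨h1, -⟩ | ⟨h1, -⟩)
    · exact hyc h1
    · exact hzc h1
end
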